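/- Let c and c* be natural numbers with c ≤ c*, let L : Fin c → Fin c* → ℝ be a cost function, and let L' : Fin c* → Fin c* → ℝ be its zero-padding (equal to L on the first c rows and 0 on the remaining rows). Suppose X' : Fin c* → Fin c* → ℕ satisfies X' i j ∈ {0,1}, ∑ j, X' i j = 1 for every row i, ∑ i, X' i j = 1 for every column j, and X' minimizes ∑ i, ∑ j, L' i j * (X' i j : ℝ) over all such 0–1 matrices with all row and column sums equal to 1. Define X : Fin c → Fin c* → ℕ by X i j = X' (Fin.castLE h i) j. Then X takes values in {0,1}, every row of X sums to 1, every column of X sums to at most 1, and X minimizes ∑ i : Fin c, ∑ j : Fin c*, L i j * (Y i j : ℝ) over all Y : Fin c → Fin c* → ℕ taking values in {0,1} with every row sum equal to 1 and every column sum at most 1. -/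

import Mathlib

/-!
The rows of a feasible `Y` for the original problem pick out an injection from computed to
ground-truth labels. It extends to a permutation of the ground-truth labels, whose permutation
matrix is feasible for the padded problem and agrees with `Y` on the first `c` rows. Since the
padded rows cost nothing, the padded cost of a matrix is the original cost of its first `c` rows,
so optimality of `X'` for the padded problem bounds the cost of its first `c` rows by that of `Y`.
-/

open Finset

section Assignment

variable {ι κ : Type*} [DecidableEq κ]

def assignmentMatrix (f : ι → κ) : ι → κ → ℕ := fun i j => if j = f i then 1 else 0

theorem assignmentMatrix_eq_zero_or_eq_one (f : ι → κ) (i : ι) (j : κ) :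
    assignmentMatrix f i j = 0 ∨ assignmentMatrix f i j = 1 := by
  unfold assignmentMatrix; split_ifs <;> simp

theorem sum_assignmentMatrix_row [Fintype κ] (f : ι → κ) (i : ι) :
    ∑ j, assignmentMatrix f i j = 1 := by
  simp [assignmentMatrix]

theorem sum_assignmentMatrix_perm_col [Fintype κ] (σ : Equiv.Perm κ) (j : κ) :
    ∑ i, assignmentMatrix σ i j = 1 := by
  simp [assignmentMatrix, ← Equiv.symm_apply_eq]

theorem Nat.exists_eq_ite_of_sum_eq_one [Fintype κ] (v : κ → ℕ) (hv : ∑ j, v j = 1) :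
    ∃ j₀, ∀ j, v j = if j = j₀ then 1 else 0 := by
  obtain ⟨j₀, -, hj₀⟩ := exists_ne_zero_of_sum_ne_zero (hv.trans_ne one_ne_zero)
  have hsplit := add_sum_erase univ v (mem_univ j₀)
  rw [hv] at hsplit
  have hrest : ∑ j ∈ univ.erase j₀, v j = 0 := by omega
  refine ⟨j₀, fun j => ?_⟩
  split_ifs with hj
  · subst hj; omega
  · exact sum_eq_zero_iff.1 hrest j (mem_erase.2 ⟨hj, mem_univ j⟩)

theorem exists_injective_eq_assignmentMatrix [Fintype ι] [Fintype κ] (Y : ι → κ → ℕ)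
    (hrow : ∀ i, ∑ j, Y i j = 1) (hcol : ∀ j, ∑ i, Y i j ≤ 1) :
    ∃ f : ι → κ, Function.Injective f ∧ Y = assignmentMatrix f := by
  classical
  choose f hf using fun i => Nat.exists_eq_ite_of_sum_eq_one (Y i) (hrow i)
  have hY : Y = assignmentMatrix f := funext fun i => funext (hf i)
  refine ⟨f, fun i₁ i₂ hf₁₂ => by_contra fun hne => ?_, hY⟩
  have hpair : ∑ i ∈ {i₁, i₂}, Y i (f i₁) ≤ 1 :=
    (sum_le_sum_of_subset (subset_univ _)).trans (hcol _)
  simp [sum_pair hne, hY, assignmentMatrix, hf₁₂] at hpair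

end Assignment

theorem Fin.sum_castLE_eq_sum {M : Type*} [AddCommMonoid M] {c n : ℕ} (h : c ≤ n)
    (g : Fin n → M) (hg : ∀ i : Fin n, c ≤ (i : ℕ) → g i = 0) :
    ∑ i : Fin c, g (Fin.castLE h i) = ∑ i, g i :=
  Fintype.sum_of_injective _ (Fin.castLE_injective h) _ _
    (fun i hi => hg i (not_lt.1 fun hlt => hi ⟨⟨i, hlt⟩, rfl⟩)) fun _ => rfl

theorem Fin.sum_castLE_le_sum {c n : ℕ} (h : c ≤ n) (g : Fin n → ℕ) :
    ∑ i : Fin c, g (Fin.castLE h i) ≤ ∑ i, g i :=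
  (sum_map univ (Fin.castLEEmb h) g).symm.trans_le (sum_le_sum_of_subset (subset_univ _))

theorem sum_sum_mul_eq_of_zero_padding {R κ : Type*} [NonUnitalNonAssocSemiring R] [Fintype κ]
    {c n : ℕ} (h : c ≤ n) {L : Fin c → κ → R} {L' : Fin n → κ → R}
    (hpad : ∀ i j, L' (Fin.castLE h i) j = L i j)
    (hzero : ∀ (i : Fin n) j, c ≤ (i : ℕ) → L' i j = 0)
    (M : Fin n → κ → R) :
    ∑ i, ∑ j, L' i j * M i j = ∑ i : Fin c, ∑ j, L i j * M (Fin.castLE h i) j := by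
  rw [← Fin.sum_castLE_eq_sum h _ fun i hi => by simp [hzero i _ hi]]
  simp only [hpad]

/-- Theorem 1 of the paper, matrix form: if `X'` is an optimal solution of the
padded square assignment problem, then its first `c` rows form an optimal solution of the
original integer linear program. -/
theorem optimal_padded_matrix_restricts_to_optimal (c cs : ℕ) (h : c ≤ cs)
    (L : Fin c → Fin cs → ℝ) (L' : Fin cs → Fin cs → ℝ)
    (hpad : ∀ (i : Fin c) (j : Fin cs), L' (Fin.castLE h i) j = L i j)
    (hzero : ∀ (i j : Fin cs), c ≤ (i : ℕ) → L' i j = 0)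
    (X' : Fin cs → Fin cs → ℕ)
    (h01 : ∀ i j : Fin cs, X' i j = 0 ∨ X' i j = 1)
    (hrow : ∀ i : Fin cs, ∑ j, X' i j = 1)
    (hcol : ∀ j : Fin cs, ∑ i, X' i j = 1)
    (hopt : ∀ Y' : Fin cs → Fin cs → ℕ,
      (∀ i j : Fin cs, Y' i j = 0 ∨ Y' i j = 1) →
      (∀ i : Fin cs, ∑ j, Y' i j = 1) →
      (∀ j : Fin cs, ∑ i, Y' i j = 1) →
      ∑ i, ∑ j, L' i j * (X' i j : ℝ) ≤ ∑ i, ∑ j, L' i j * (Y' i j : ℝ)) :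
    (∀ (i : Fin c) (j : Fin cs),
        X' (Fin.castLE h i) j = 0 ∨ X' (Fin.castLE h i) j = 1) ∧
    (∀ i : Fin c, ∑ j, X' (Fin.castLE h i) j = 1) ∧
    (∀ j : Fin cs, ∑ i : Fin c, X' (Fin.castLE h i) j ≤ 1) ∧
    (∀ Y : Fin c → Fin cs → ℕ,
      (∀ (i : Fin c) (j : Fin cs), Y i j = 0 ∨ Y i j = 1) →
      (∀ i : Fin c, ∑ j, Y i j = 1) →
      (∀ j : Fin cs, ∑ i : Fin c, Y i j ≤ 1) →
      ∑ i : Fin c, ∑ j : Fin cs, L i j * (X' (Fin.castLE h i) j : ℝ) ≤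
        ∑ i : Fin c, ∑ j : Fin cs, L i j * (Y i j : ℝ)) := by
  refine ⟨fun i => h01 _, fun i => hrow _,
    fun j => (Fin.sum_castLE_le_sum h _).trans_eq (hcol j), ?_⟩
  intro Y _ hYrow hYcol
  obtain ⟨f, hf, rfl⟩ := exists_injective_eq_assignmentMatrix Y hYrow hYcol
  obtain ⟨σ, hσ⟩ :=
    Equiv.Perm.exists_extending_pair (Fin.castLE h) f (Fin.castLE_injective h) hf
  have hcost := sum_sum_mul_eq_of_zero_padding h hpad hzero
  calc ∑ i : Fin c, ∑ j, L i j * (X' (Fin.castLE h i) j : ℝ)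
      = ∑ i, ∑ j, L' i j * (X' i j : ℝ) := (hcost fun i j => (X' i j : ℝ)).symm
    _ ≤ ∑ i, ∑ j, L' i j * (assignmentMatrix σ i j : ℝ) :=
      hopt _ (assignmentMatrix_eq_zero_or_eq_one σ) (sum_assignmentMatrix_row σ)
        (sum_assignmentMatrix_perm_col σ)
    _ = ∑ i : Fin c, ∑ j, L i j * (assignmentMatrix f i j : ℝ) := by
      rw [hcost fun i j => (assignmentMatrix σ i j : ℝ)]; simp only [assignmentMatrix, hσ]
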